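/- Assume (H), let k ≥ κ and c₁ > c₂ > 0. For i = 1, 2, let φᵢ be a sharp local wave profile with speed cᵢ and ceiling k on (−∞, ξ₀ⁱ), satisfying the edge asymptotics φᵢ(ξ)·ξ^{−1/(m−1)} → ((m−1)cᵢ/m)^{1/(m−1)} as ξ → 0⁺, with maximal existence interval, and let (0, ξ̂ᵢ) ⊆ (0, ξ₀ⁱ) be the maximal interval on which φᵢ is strictly increasing. Then φ₁(ξ) > φ₂(ξ) for all ξ ∈ (0, min{ξ̂₁, ξ̂₂}). (Monotone dependence of the profiles on the speed c.) -/

import Mathlib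

open Real Filter Set MeasureTheory

/-- Standing hypotheses (H): degenerate Fisher-KPP data. -/
structure FisherData where
  m : ℝ
  r : ℝ
  d : ℝ → ℝ
  b : ℝ → ℝ
  κ : ℝ
  hm : 1 < m
  hr : 0 ≤ r
  hd_smooth : ContDiffOn ℝ 2 d (Set.Ici 0)
  hb_smooth : ContDiffOn ℝ 2 b (Set.Ici 0)
  hd0 : d 0 = 0
  hb0 : b 0 = 0
  hκ : 0 < κ
  heq : d κ = b κ
  hsign : ∀ s : ℝ, 0 < s → s ≠ κ → (b s - d s) * (s - κ) < 0
  hbd0 : derivWithin d (Set.Ici 0) 0 < derivWithin b (Set.Ici 0) 0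
  hd0' : 0 ≤ derivWithin d (Set.Ici 0) 0
  hd' : ∀ s : ℝ, 0 ≤ s → 0 ≤ derivWithin d (Set.Ici 0) s
  hb' : ∀ s : ℝ, 0 ≤ s → 0 ≤ derivWithin b (Set.Ici 0) s

/-- The function `φ^m` (real power). -/
noncomputable def phiPow (m : ℝ) (φ : ℝ → ℝ) : ℝ → ℝ := fun ξ => φ ξ ^ m

/-- A sharp local wave profile with speed `c` and ceiling `k` on `(-∞, ξ₀)`
(`ξ₀ ∈ (0, +∞]` as an extended real). -/
def IsSharpLocalProfile (D : FisherData) (c k : ℝ) (ξ₀ : EReal) (φ : ℝ → ℝ) : Prop :=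
  0 < ξ₀ ∧ Continuous φ ∧
  (∀ ξ : ℝ, ξ ≤ 0 → φ ξ = 0) ∧
  (∀ ξ : ℝ, 0 < ξ → (ξ : EReal) < ξ₀ → φ ξ ∈ Set.Ioo 0 k) ∧
  (∀ ξ : ℝ, 0 < ξ → (ξ : EReal) < ξ₀ → DifferentiableAt ℝ φ ξ) ∧
  (∀ ξ : ℝ, 0 < ξ → (ξ : EReal) < ξ₀ → DifferentiableAt ℝ (phiPow D.m φ) ξ) ∧
  (∀ ξ : ℝ, 0 < ξ → (ξ : EReal) < ξ₀ → DifferentiableAt ℝ (deriv (phiPow D.m φ)) ξ) ∧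
  Filter.Tendsto (deriv (phiPow D.m φ)) (nhdsWithin 0 (Set.Ioi 0)) (nhds 0) ∧
  (∀ ξ : ℝ, 0 < ξ → (ξ : EReal) < ξ₀ →
    c * deriv φ ξ = deriv (deriv (phiPow D.m φ)) ξ - D.d (φ ξ) + D.b (φ (ξ - c * D.r)))

/-- Edge asymptotics `φ(ξ)·ξ^{-1/(m-1)} → ((m-1)c/m)^{1/(m-1)}` as `ξ → 0⁺`. -/
def EdgeAsymp (m c : ℝ) (φ : ℝ → ℝ) : Prop :=
  Filter.Tendsto (fun ξ : ℝ => φ ξ * ξ ^ (-(1 / (m - 1))))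
    (nhdsWithin 0 (Set.Ioi 0)) (nhds (((m - 1) * c / m) ^ (1 / (m - 1))))

/-- The filter of real numbers tending to `ξ₀ ∈ (0, +∞]` from the left
(equal to `atTop` when `ξ₀ = ⊤`). -/
noncomputable def edgeFilter (ξ₀ : EReal) : Filter ℝ :=
  Filter.comap (fun x : ℝ => (x : EReal)) (nhdsWithin ξ₀ (Set.Iio ξ₀))

open Topology

/-!
Suppose `φ₁ ξ ≤ φ₂ ξ` for some `ξ`. The edge asymptotics give `φ₂ < φ₁` near `0`, so there is a
first crossing point `X`, and there `(φ₁^m)' ≤ (φ₂^m)'`. Compare the fluxes `ψᵢ = (φᵢ^m)'` at equal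
levels through `χ = φ₁⁻¹ ∘ φ₂` on `(0, X]`: since `ψᵢ / φᵢ → cᵢ` at the edge, `ψ₂ < ψ₁ ∘ χ` near
`0`, so there is a first `ζ₀` with `ψ₂ ζ₀ = ψ₁ (χ ζ₀)`. Before `ζ₀` we have `χ' = ψ₂ / ψ₁ ∘ χ ≤ 1`,
so the delayed terms compare as `φ₁ (χ ζ - c₁ r) ≤ φ₂ (ζ - c₂ r)`, and the equation then gives
`ψ₂' ≤ ψ₁' ∘ χ`. Hence `(ψ₁ ∘ χ)² - ψ₂²`, with derivative `2 ψ₂ (ψ₁' ∘ χ - ψ₂')`, is nondecreasing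
on `(0, ζ₀]`; it is positive before `ζ₀` and vanishes at `ζ₀`, a contradiction.
-/

theorem HasDerivAt.nonneg_of_le_on_left {f : ℝ → ℝ} {f' a x : ℝ} (hf : HasDerivAt f f' x)
    (hax : a < x) (h : ∀ y ∈ Ioo a x, f y ≤ f x) : 0 ≤ f' := by
  have hslope : Tendsto (slope f x) (𝓝[<] x) (𝓝 f') :=
    (hasDerivAt_iff_tendsto_slope.1 hf).mono_left (nhdsWithin_mono x fun y hy => ne_of_lt hy)
  refine ge_of_tendsto hslope ?_
  filter_upwards [Ioo_mem_nhdsLT hax] with y hy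
  rw [slope_def_field]
  exact div_nonneg_of_nonpos (by linarith [h y hy]) (by linarith [hy.2])

theorem exists_first_crossing {f g : ℝ → ℝ} {a b : ℝ} (hab : a < b)
    (hf : ContinuousOn f (Ioc a b)) (hg : ContinuousOn g (Ioc a b))
    (ha : ∀ᶠ x in 𝓝[>] a, f x < g x) (hb : g b ≤ f b) :
    ∃ c ∈ Ioc a b, f c = g c ∧ ∀ x ∈ Ioo a c, f x < g x := by
  obtain ⟨u, hau, hu⟩ := mem_nhdsGT_iff_exists_Ioo_subset.1 ha
  have hub : u ≤ b := not_lt.1 fun hbu => (hu ⟨hab, hbu⟩).not_ge hb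
  obtain ⟨a', ha'⟩ := nonempty_Ioo.2 (mem_Ioi.1 hau)
  have ha'b : a' ≤ b := by linarith [ha'.2]
  have hsub : Icc a' b ⊆ Ioc a b := Icc_subset_Ioc_iff ha'b |>.2 ⟨ha'.1, le_rfl⟩
  have hS : IsCompact {x ∈ Icc a' b | g x ≤ f x} :=
    isCompact_Icc.of_isClosed_subset
      (isClosed_Icc.isClosed_le (hg.mono hsub) (hf.mono hsub)) fun x hx => hx.1
  obtain ⟨c, ⟨hcI, hcle⟩, hcmin⟩ := hS.exists_isLeast ⟨b, ⟨ha'b, le_rfl⟩, hb⟩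
  have hbefore : ∀ x ∈ Ioo a c, f x < g x := by
    intro x hx
    by_cases hxu : x < u
    · exact hu ⟨hx.1, hxu⟩
    · exact not_le.1 fun hgf =>
        hx.2.not_ge (hcmin ⟨⟨by linarith [ha'.2], by linarith [hx.2, hcI.2]⟩, hgf⟩)
  have hac : a < c := by linarith [hcI.1, ha'.1]
  refine ⟨c, hsub hcI, le_antisymm ?_ hcle, hbefore⟩
  have hcl : c ∈ closure (Ioo a c) := by rw [closure_Ioo hac.ne]; exact ⟨hac.le, le_rfl⟩
  have hIoo : Ioo a c ⊆ Ioc a b := fun x hx => ⟨hx.1, by linarith [hx.2, hcI.2]⟩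
  exact ContinuousWithinAt.closure_le hcl ((hf _ (hsub hcI)).mono hIoo)
    ((hg _ (hsub hcI)).mono hIoo) fun x hx => (hbefore x hx).le

theorem continuousOn_invFunOn_Icc {f : ℝ → ℝ} {a b : ℝ} (hab : a ≤ b)
    (hf : ContinuousOn f (Icc a b)) (hmono : StrictMonoOn f (Icc a b)) :
    ContinuousOn (Function.invFunOn f (Icc a b)) (Icc (f a) (f b)) := by
  have himage := hf.image_Icc_of_monotoneOn hab hmono.monotoneOn
  rw [← himage]
  have : OrdConnected (f '' Icc a b) := by rw [himage]; infer_instance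
  let e := hmono.orderIso f (Icc a b)
  rw [continuousOn_iff_continuous_domRestrict]
  have heq : (f '' Icc a b).domRestrict (Function.invFunOn f (Icc a b)) = Subtype.val ∘ e.symm := by
    funext y
    have hinv := Function.invFunOn_pos y.2
    exact hmono.injOn hinv.1 (e.symm y).2
      (hinv.2.trans (congrArg Subtype.val (e.apply_symm_apply y)).symm)
  rw [heq]
  exact continuous_subtype_val.comp e.symm.continuous

theorem monotoneOn_Ici_of_derivWithin_nonneg {f : ℝ → ℝ} {a : ℝ}
    (hf : DifferentiableOn ℝ f (Ici a)) (hf' : ∀ x ∈ Ioi a, 0 ≤ derivWithin f (Ici a) x) :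
    MonotoneOn f (Ici a) := by
  refine monotoneOn_of_hasDerivWithinAt_nonneg (convex_Ici a) hf.continuousOn
    (fun x hx => ?_) (fun x hx => hf' x (by rwa [interior_Ici] at hx))
  rw [interior_Ici (a := a)] at hx ⊢
  exact (hf x (mem_Ici.2 hx.le)).hasDerivWithinAt.mono Ioi_subset_Ici_self

theorem ContDiffOn.exists_le_mul_of_map_zero {f : ℝ → ℝ} {n : WithTop ℕ∞}
    (hf : ContDiffOn ℝ n f (Ici 0)) (hn : n ≠ 0) (hf0 : f 0 = 0) (S : ℝ) :
    ∃ K, ∀ t ∈ Icc 0 S, f t ≤ K * t := by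
  obtain ⟨K, hK⟩ :=
    (hf.mono Icc_subset_Ici_self).exists_lipschitzOnWith hn (convex_Icc 0 S) isCompact_Icc
  refine ⟨K, fun t ht => ?_⟩
  have := hK.dist_le_mul t ht 0 ⟨le_rfl, ht.1.trans ht.2⟩
  rw [Real.dist_eq, Real.dist_eq, hf0, sub_zero, sub_zero, abs_of_nonneg ht.1] at this
  exact (le_abs_self _).trans this

namespace FisherData

variable (D : FisherData)

theorem m_pos : 0 < D.m := zero_lt_one.trans D.hm

theorem monotoneOn_d : MonotoneOn D.d (Ici 0) :=
  monotoneOn_Ici_of_derivWithin_nonneg (D.hd_smooth.differentiableOn (by norm_num))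
    fun s hs => D.hd' s (le_of_lt hs)

theorem monotoneOn_b : MonotoneOn D.b (Ici 0) :=
  monotoneOn_Ici_of_derivWithin_nonneg (D.hb_smooth.differentiableOn (by norm_num))
    fun s hs => D.hb' s (le_of_lt hs)

theorem d_nonneg {s : ℝ} (hs : 0 ≤ s) : 0 ≤ D.d s :=
  D.hd0 ▸ D.monotoneOn_d self_mem_Ici hs hs

theorem b_nonneg {s : ℝ} (hs : 0 ≤ s) : 0 ≤ D.b s :=
  D.hb0 ▸ D.monotoneOn_b self_mem_Ici hs hs

theorem exists_d_add_b_le_mul (S : ℝ) : ∃ K, ∀ t ∈ Icc 0 S, D.d t + D.b t ≤ K * t :=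
  (D.hd_smooth.add D.hb_smooth).exists_le_mul_of_map_zero (by norm_num)
    (by simp [D.hd0, D.hb0]) S

end FisherData

theorem EdgeAsymp.eventually_lt {m c₁ c₂ : ℝ} {φ₁ φ₂ : ℝ → ℝ} (hm : 1 < m) (hc₂ : 0 ≤ c₂)
    (hc : c₂ < c₁) (h₁ : EdgeAsymp m c₁ φ₁) (h₂ : EdgeAsymp m c₂ φ₂) :
    ∀ᶠ ξ in 𝓝[>] 0, φ₂ ξ < φ₁ ξ := by
  have hm1 : 0 < m - 1 := sub_pos.2 hm
  have hL : ((m - 1) * c₂ / m) ^ (1 / (m - 1)) < ((m - 1) * c₁ / m) ^ (1 / (m - 1)) :=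
    Real.rpow_lt_rpow (by positivity) (by gcongr) (by positivity)
  filter_upwards [Filter.Tendsto.eventually_lt h₂ h₁ hL, self_mem_nhdsWithin] with ξ hξ hξpos
  exact lt_of_mul_lt_mul_right hξ (Real.rpow_nonneg (le_of_lt hξpos) _)

theorem IsSharpLocalProfile.continuous {D : FisherData} {c k : ℝ} {ξ₀ : EReal} {φ : ℝ → ℝ}
    (h : IsSharpLocalProfile D c k ξ₀ φ) : Continuous φ :=
  h.2.1

structure IsIncreasingProfileOn (D : FisherData) (c : ℝ) (φ : ℝ → ℝ) (X : ℝ) : Prop where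
  continuous : Continuous φ
  eq_zero_of_nonpos : ∀ ξ ≤ 0, φ ξ = 0
  strictMonoOn : StrictMonoOn φ (Icc 0 X)
  differentiableAt : ∀ ξ ∈ Ioc 0 X, DifferentiableAt ℝ φ ξ
  hasDerivAt_deriv_phiPow : ∀ ξ ∈ Ioc 0 X, HasDerivAt (deriv (phiPow D.m φ))
    (c * deriv φ ξ + D.d (φ ξ) - D.b (φ (ξ - c * D.r))) ξ
  tendsto_deriv_phiPow : Tendsto (deriv (phiPow D.m φ)) (𝓝[>] 0) (𝓝 0)

theorem IsSharpLocalProfile.isIncreasingProfileOn {D : FisherData} {c k : ℝ} {ξ₀ ξh : EReal}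
    {φ : ℝ → ℝ} (h : IsSharpLocalProfile D c k ξ₀ φ) (hξh : ξh ≤ ξ₀)
    (hmono : StrictMonoOn φ {ξ : ℝ | 0 < ξ ∧ (ξ : EReal) < ξh}) {X : ℝ} (hX : (X : EReal) < ξh) :
    IsIncreasingProfileOn D c φ X := by
  obtain ⟨-, hcont, hzero, hmem, hdiff, -, hdiff2, hlim, hode⟩ := h
  have hlt : ∀ ξ ∈ Ioc 0 X, (ξ : EReal) < ξh := fun ξ hξ =>
    (EReal.coe_le_coe_iff.2 hξ.2).trans_lt hX
  have hlt₀ : ∀ ξ ∈ Ioc 0 X, (ξ : EReal) < ξ₀ := fun ξ hξ => (hlt ξ hξ).trans_le hξh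
  refine ⟨hcont, hzero, ?_, fun ξ hξ => hdiff ξ hξ.1 (hlt₀ ξ hξ), fun ξ hξ => ?_, hlim⟩
  · intro x hx y hy hxy
    have hy' : y ∈ Ioc 0 X := ⟨hx.1.trans_lt hxy, hy.2⟩
    rcases hx.1.eq_or_lt with rfl | hx0
    · rw [hzero 0 le_rfl]
      exact (hmem y hy'.1 (hlt₀ y hy')).1
    · exact hmono ⟨hx0, hlt x ⟨hx0, hx.2⟩⟩ ⟨hy'.1, hlt y hy'⟩ hxy
  · exact (hdiff2 ξ hξ.1 (hlt₀ ξ hξ)).hasDerivAt.congr_deriv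
      (by linarith [hode ξ hξ.1 (hlt₀ ξ hξ)])

namespace IsIncreasingProfileOn

variable {D : FisherData} {c X : ℝ} {φ : ℝ → ℝ}

theorem pos (P : IsIncreasingProfileOn D c φ X) {ξ : ℝ} (hξ : ξ ∈ Ioc 0 X) : 0 < φ ξ := by
  simpa [P.eq_zero_of_nonpos 0 le_rfl] using
    P.strictMonoOn ⟨le_rfl, hξ.1.le.trans hξ.2⟩ ⟨hξ.1.le, hξ.2⟩ hξ.1

theorem nonneg (P : IsIncreasingProfileOn D c φ X) {ξ : ℝ} (hξ : ξ ≤ X) : 0 ≤ φ ξ := by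
  rcases le_or_gt ξ 0 with h | h
  · exact (P.eq_zero_of_nonpos ξ h).ge
  · exact (P.pos ⟨h, hξ⟩).le

theorem monotoneOn_Iic (P : IsIncreasingProfileOn D c φ X) : MonotoneOn φ (Iic X) := by
  intro x hx y hy hxy
  rcases le_or_gt x 0 with h | h
  · rw [P.eq_zero_of_nonpos x h]
    exact P.nonneg hy
  · exact P.strictMonoOn.monotoneOn ⟨h.le, hx⟩ ⟨h.le.trans hxy, hy⟩ hxy

theorem hasDerivAt_phiPow (P : IsIncreasingProfileOn D c φ X) {ξ : ℝ} (hξ : ξ ∈ Ioc 0 X) :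
    HasDerivAt (phiPow D.m φ) (D.m * φ ξ ^ (D.m - 1) * deriv φ ξ) ξ :=
  (Real.hasDerivAt_rpow_const (Or.inl (P.pos hξ).ne')).comp ξ
    (P.differentiableAt ξ hξ).hasDerivAt

theorem deriv_phiPow (P : IsIncreasingProfileOn D c φ X) {ξ : ℝ} (hξ : ξ ∈ Ioc 0 X) :
    deriv (phiPow D.m φ) ξ = D.m * φ ξ ^ (D.m - 1) * deriv φ ξ :=
  (P.hasDerivAt_phiPow hξ).deriv

theorem deriv_nonneg (P : IsIncreasingProfileOn D c φ X) {ξ : ℝ} (hξ : ξ ∈ Ioc 0 X) :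
    0 ≤ deriv φ ξ :=
  (P.differentiableAt ξ hξ).hasDerivAt.nonneg_of_le_on_left hξ.1 fun _ hy =>
    P.monotoneOn_Iic (hy.2.le.trans hξ.2) hξ.2 hy.2.le

theorem deriv_phiPow_nonneg (P : IsIncreasingProfileOn D c φ X) {ξ : ℝ} (hξ : ξ ∈ Ioc 0 X) :
    0 ≤ deriv (phiPow D.m φ) ξ := by
  have := D.m_pos
  have := P.pos hξ
  have := P.deriv_nonneg hξ
  rw [P.deriv_phiPow hξ]
  positivity

theorem continuousOn_deriv_phiPow (P : IsIncreasingProfileOn D c φ X) :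
    ContinuousOn (deriv (phiPow D.m φ)) (Ioc 0 X) :=
  fun ξ hξ => (P.hasDerivAt_deriv_phiPow ξ hξ).continuousAt.continuousWithinAt

theorem abs_deriv_phiPow_sub_le (P : IsIncreasingProfileOn D c φ X) (hc : 0 ≤ c) {ξ : ℝ}
    (hξ : ξ ∈ Ioc 0 X) :
    |deriv (phiPow D.m φ) ξ - c * φ ξ| ≤ ξ * (D.d (φ ξ) + D.b (φ ξ)) := by
  set F := fun t => deriv (phiPow D.m φ) t - c * φ t
  set M := D.d (φ ξ) + D.b (φ ξ)
  have hF : ∀ t ∈ Ioc 0 ξ, HasDerivAt F (D.d (φ t) - D.b (φ (t - c * D.r))) t := by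
    intro t ht
    have htX : t ∈ Ioc 0 X := ⟨ht.1, ht.2.trans hξ.2⟩
    exact ((P.hasDerivAt_deriv_phiPow t htX).sub
      ((P.differentiableAt t htX).hasDerivAt.const_mul c)).congr_deriv (by ring)
  have hbound : ∀ t ∈ Ioc 0 ξ, ‖D.d (φ t) - D.b (φ (t - c * D.r))‖ ≤ M := by
    intro t ht
    have htξ : t - c * D.r ≤ ξ := by nlinarith [D.hr, ht.2]
    have hd := D.monotoneOn_d (P.nonneg (ht.2.trans hξ.2)) (P.nonneg hξ.2)
      (P.monotoneOn_Iic (ht.2.trans hξ.2) hξ.2 ht.2)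
    have hb := D.monotoneOn_b (P.nonneg (htξ.trans hξ.2)) (P.nonneg hξ.2)
      (P.monotoneOn_Iic (htξ.trans hξ.2) hξ.2 htξ)
    have := D.d_nonneg (P.nonneg (ht.2.trans hξ.2))
    have := D.b_nonneg (P.nonneg (htξ.trans hξ.2))
    rw [Real.norm_eq_abs, abs_sub_le_iff]
    constructor <;> linarith
  have hM : 0 ≤ M := add_nonneg (D.d_nonneg (P.nonneg hξ.2)) (D.b_nonneg (P.nonneg hξ.2))
  have hF0 : Tendsto F (𝓝[>] 0) (𝓝 0) := by
    have hφ : Tendsto φ (𝓝[>] 0) (𝓝 0) := by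
      simpa [P.eq_zero_of_nonpos 0 le_rfl] using
        (P.continuous.tendsto 0).mono_left nhdsWithin_le_nhds
    simpa using P.tendsto_deriv_phiPow.sub (hφ.const_mul c)
  have hclose : ∀ᶠ ε in 𝓝[>] 0, ‖F ξ - F ε‖ ≤ M * ξ := by
    filter_upwards [Ioo_mem_nhdsGT hξ.1] with ε hε
    have hMVT := norm_image_sub_le_of_norm_deriv_le_segment' (f := F) (C := M)
      (fun t ht => (hF t ⟨hε.1.trans_le ht.1, ht.2⟩).hasDerivWithinAt)
      (fun t ht => hbound t ⟨hε.1.trans_le ht.1, ht.2.le⟩) ξ ⟨hε.2.le, le_rfl⟩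
    nlinarith [hε.1]
  have hlim := le_of_tendsto ((tendsto_const_nhds (x := F ξ)).sub hF0).norm hclose
  rw [sub_zero, Real.norm_eq_abs] at hlim
  linarith

theorem tendsto_deriv_phiPow_div (P : IsIncreasingProfileOn D c φ X) (hc : 0 ≤ c) (hX : 0 < X) :
    Tendsto (fun ξ => deriv (phiPow D.m φ) ξ / φ ξ) (𝓝[>] 0) (𝓝 c) := by
  obtain ⟨K, hK⟩ := D.exists_d_add_b_le_mul (φ X)
  have hbound : ∀ ξ ∈ Ioc 0 X, ‖deriv (phiPow D.m φ) ξ / φ ξ - c‖ ≤ K * ξ := by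
    intro ξ hξ
    have hpos := P.pos hξ
    have hDB := hK (φ ξ) ⟨hpos.le, P.monotoneOn_Iic hξ.2 (mem_Iic.2 le_rfl) hξ.2⟩
    rw [Real.norm_eq_abs, div_sub' hpos.ne', abs_div, abs_of_pos hpos, div_le_iff₀ hpos]
    calc |deriv (phiPow D.m φ) ξ - φ ξ * c| ≤ ξ * (D.d (φ ξ) + D.b (φ ξ)) := by
          simpa [mul_comm] using P.abs_deriv_phiPow_sub_le hc hξ
      _ ≤ ξ * (K * φ ξ) := mul_le_mul_of_nonneg_left hDB hξ.1.le
      _ = K * ξ * φ ξ := by ring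
  rw [tendsto_iff_norm_sub_tendsto_zero]
  refine squeeze_zero' (g := fun ξ => K * ξ) (Eventually.of_forall fun _ => norm_nonneg _) ?_ ?_
  · filter_upwards [Ioc_mem_nhdsGT hX] with ξ hξ using hbound ξ hξ
  · have : Tendsto (fun ξ : ℝ => K * ξ) (𝓝 0) (𝓝 (K * 0)) := tendsto_id.const_mul K
    rw [mul_zero] at this
    exact this.mono_left nhdsWithin_le_nhds

theorem surjOn (P : IsIncreasingProfileOn D c φ X) (hX : 0 ≤ X) :
    SurjOn φ (Icc 0 X) (Icc 0 (φ X)) := by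
  have := intermediate_value_Icc hX P.continuous.continuousOn
  rwa [P.eq_zero_of_nonpos 0 le_rfl] at this

theorem continuousOn_invFunOn (P : IsIncreasingProfileOn D c φ X) (hX : 0 ≤ X) :
    ContinuousOn (Function.invFunOn φ (Icc 0 X)) (Icc 0 (φ X)) := by
  simpa [P.eq_zero_of_nonpos 0 le_rfl] using
    continuousOn_invFunOn_Icc hX P.continuous.continuousOn P.strictMonoOn

theorem hasDerivAt_invFunOn (P : IsIncreasingProfileOn D c φ X) (hX : 0 ≤ X) {y : ℝ}
    (hy : y ∈ Ioo 0 (φ X)) (hφ' : deriv φ (Function.invFunOn φ (Icc 0 X) y) ≠ 0) :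
    HasDerivAt (Function.invFunOn φ (Icc 0 X)) (deriv φ (Function.invFunOn φ (Icc 0 X) y))⁻¹ y := by
  have hinv := (P.surjOn hX).rightInvOn_invFunOn
  have hmem := (P.surjOn hX).mapsTo_invFunOn (Ioo_subset_Icc_self hy)
  have hpos : 0 < Function.invFunOn φ (Icc 0 X) y := by
    refine lt_of_le_of_ne hmem.1 fun h => hy.1.ne ?_
    rw [← hinv (Ioo_subset_Icc_self hy), ← h, P.eq_zero_of_nonpos 0 le_rfl]
  refine HasDerivAt.of_local_left_inverse
    ((P.continuousOn_invFunOn hX).continuousAt (Icc_mem_nhds hy.1 hy.2))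
    (P.differentiableAt _ ⟨hpos, hmem.2⟩).hasDerivAt hφ' ?_
  filter_upwards [Icc_mem_nhds hy.1 hy.2] with z hz using hinv hz

end IsIncreasingProfileOn

noncomputable def levelMap (φ₁ φ₂ : ℝ → ℝ) (X : ℝ) : ℝ → ℝ :=
  Function.invFunOn φ₁ (Icc 0 X) ∘ φ₂

section Comparison

variable {D : FisherData} {c₁ c₂ X : ℝ} {φ₁ φ₂ : ℝ → ℝ}

theorem apply_mem_Icc_of_le (P₂ : IsIncreasingProfileOn D c₂ φ₂ X) (hX : φ₂ X ≤ φ₁ X) {ζ : ℝ}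
    (hζ : ζ ≤ X) : φ₂ ζ ∈ Icc 0 (φ₁ X) :=
  ⟨P₂.nonneg hζ, (P₂.monotoneOn_Iic hζ (mem_Iic.2 le_rfl) hζ).trans hX⟩

theorem levelMap_mem (P₁ : IsIncreasingProfileOn D c₁ φ₁ X)
    (P₂ : IsIncreasingProfileOn D c₂ φ₂ X) (hX : φ₂ X ≤ φ₁ X) {ζ : ℝ} (hζ : ζ ∈ Icc 0 X) :
    levelMap φ₁ φ₂ X ζ ∈ Icc 0 X :=
  (P₁.surjOn (hζ.1.trans hζ.2)).mapsTo_invFunOn (apply_mem_Icc_of_le P₂ hX hζ.2)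

theorem apply_levelMap (P₁ : IsIncreasingProfileOn D c₁ φ₁ X)
    (P₂ : IsIncreasingProfileOn D c₂ φ₂ X) (hX : φ₂ X ≤ φ₁ X) {ζ : ℝ} (hζ : ζ ∈ Icc 0 X) :
    φ₁ (levelMap φ₁ φ₂ X ζ) = φ₂ ζ :=
  (P₁.surjOn (hζ.1.trans hζ.2)).rightInvOn_invFunOn (apply_mem_Icc_of_le P₂ hX hζ.2)

theorem levelMap_self (P₁ : IsIncreasingProfileOn D c₁ φ₁ X) (hX : 0 ≤ X)
    (hXeq : φ₁ X = φ₂ X) : levelMap φ₁ φ₂ X X = X := by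
  rw [levelMap, Function.comp_apply, ← hXeq]
  exact P₁.strictMonoOn.injOn.leftInvOn_invFunOn ⟨hX, le_rfl⟩

theorem levelMap_pos (P₁ : IsIncreasingProfileOn D c₁ φ₁ X)
    (P₂ : IsIncreasingProfileOn D c₂ φ₂ X) (hX : φ₂ X ≤ φ₁ X) {ζ : ℝ} (hζ : ζ ∈ Ioc 0 X) :
    0 < levelMap φ₁ φ₂ X ζ := by
  refine lt_of_le_of_ne (levelMap_mem P₁ P₂ hX (Ioc_subset_Icc_self hζ)).1 fun h => ?_
  have := apply_levelMap P₁ P₂ hX (Ioc_subset_Icc_self hζ)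
  rw [← h, P₁.eq_zero_of_nonpos 0 le_rfl] at this
  exact (P₂.pos hζ).ne this

theorem levelMap_le (P₁ : IsIncreasingProfileOn D c₁ φ₁ X)
    (P₂ : IsIncreasingProfileOn D c₂ φ₂ X) (hX : φ₂ X ≤ φ₁ X) {ζ : ℝ} (hζ : ζ ∈ Icc 0 X)
    (hle : φ₂ ζ ≤ φ₁ ζ) : levelMap φ₁ φ₂ X ζ ≤ ζ :=
  (P₁.strictMonoOn.le_iff_le (levelMap_mem P₁ P₂ hX hζ) hζ).1
    (apply_levelMap P₁ P₂ hX hζ ▸ hle)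

theorem continuousOn_levelMap (P₁ : IsIncreasingProfileOn D c₁ φ₁ X)
    (P₂ : IsIncreasingProfileOn D c₂ φ₂ X) (hX : φ₂ X ≤ φ₁ X) (hX₀ : 0 ≤ X) :
    ContinuousOn (levelMap φ₁ φ₂ X) (Icc 0 X) :=
  (P₁.continuousOn_invFunOn hX₀).comp P₂.continuous.continuousOn
    fun _ hζ => apply_mem_Icc_of_le P₂ hX hζ.2

theorem continuousOn_deriv_phiPow_levelMap (P₁ : IsIncreasingProfileOn D c₁ φ₁ X)
    (P₂ : IsIncreasingProfileOn D c₂ φ₂ X) (hX : φ₂ X ≤ φ₁ X) :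
    ContinuousOn (fun ζ => deriv (phiPow D.m φ₁) (levelMap φ₁ φ₂ X ζ)) (Ioc 0 X) := by
  rcases le_or_gt X 0 with hX₀ | hX₀
  · simp [Ioc_eq_empty_of_le hX₀]
  exact P₁.continuousOn_deriv_phiPow.comp
    ((continuousOn_levelMap P₁ P₂ hX hX₀.le).mono Ioc_subset_Icc_self)
    fun _ hζ => ⟨levelMap_pos P₁ P₂ hX hζ, (levelMap_mem P₁ P₂ hX (Ioc_subset_Icc_self hζ)).2⟩

theorem deriv_lt_deriv_levelMap (P₁ : IsIncreasingProfileOn D c₁ φ₁ X)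
    (P₂ : IsIncreasingProfileOn D c₂ φ₂ X) (hX : φ₂ X ≤ φ₁ X) {ζ : ℝ} (hζ : ζ ∈ Ioc 0 X)
    (hψ : deriv (phiPow D.m φ₂) ζ < deriv (phiPow D.m φ₁) (levelMap φ₁ φ₂ X ζ)) :
    deriv φ₂ ζ < deriv φ₁ (levelMap φ₁ φ₂ X ζ) := by
  have hχ : levelMap φ₁ φ₂ X ζ ∈ Ioc 0 X :=
    ⟨levelMap_pos P₁ P₂ hX hζ, (levelMap_mem P₁ P₂ hX (Ioc_subset_Icc_self hζ)).2⟩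
  rw [P₂.deriv_phiPow hζ, P₁.deriv_phiPow hχ, apply_levelMap P₁ P₂ hX (Ioc_subset_Icc_self hζ)]
    at hψ
  exact lt_of_mul_lt_mul_left hψ
    (mul_nonneg D.m_pos.le (Real.rpow_nonneg (P₂.pos hζ).le _))

theorem hasDerivAt_levelMap (P₁ : IsIncreasingProfileOn D c₁ φ₁ X)
    (P₂ : IsIncreasingProfileOn D c₂ φ₂ X) (hX : φ₂ X ≤ φ₁ X) {ζ : ℝ} (hζ : ζ ∈ Ioo 0 X)
    (hψ : deriv (phiPow D.m φ₂) ζ < deriv (phiPow D.m φ₁) (levelMap φ₁ φ₂ X ζ)) :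
    HasDerivAt (levelMap φ₁ φ₂ X)
      (deriv (phiPow D.m φ₂) ζ / deriv (phiPow D.m φ₁) (levelMap φ₁ φ₂ X ζ)) ζ := by
  have hζ' : ζ ∈ Ioc 0 X := Ioo_subset_Ioc_self hζ
  have hχ : levelMap φ₁ φ₂ X ζ ∈ Ioc 0 X :=
    ⟨levelMap_pos P₁ P₂ hX hζ', (levelMap_mem P₁ P₂ hX (Ioc_subset_Icc_self hζ')).2⟩
  have hφ'pos := (P₂.deriv_nonneg hζ').trans_lt (deriv_lt_deriv_levelMap P₁ P₂ hX hζ' hψ)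
  have hlevel : φ₂ ζ ∈ Ioo 0 (φ₁ X) :=
    ⟨P₂.pos hζ',
      (P₂.strictMonoOn ⟨hζ.1.le, hζ.2.le⟩ ⟨hζ.1.le.trans hζ.2.le, le_rfl⟩ hζ.2).trans_le hX⟩
  have hs := apply_levelMap P₁ P₂ hX (Ioc_subset_Icc_self hζ')
  refine ((P₁.hasDerivAt_invFunOn (hζ.1.le.trans hζ.2.le) hlevel hφ'pos.ne').comp ζ
    (P₂.differentiableAt ζ hζ').hasDerivAt).congr_deriv ?_
  rw [P₂.deriv_phiPow hζ', P₁.deriv_phiPow hχ, hs]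
  have hA : 0 < D.m * φ₂ ζ ^ (D.m - 1) :=
    mul_pos D.m_pos (Real.rpow_pos_of_pos (P₂.pos hζ') _)
  rw [mul_div_mul_left _ _ hA.ne', div_eq_inv_mul]
  rfl

theorem deriv_phiPow_le_of_lt_left (P₁ : IsIncreasingProfileOn D c₁ φ₁ X)
    (P₂ : IsIncreasingProfileOn D c₂ φ₂ X) (hX : 0 < X) (hXeq : φ₂ X = φ₁ X)
    (hlt : ∀ ξ ∈ Ioo 0 X, φ₂ ξ < φ₁ ξ) :
    deriv (phiPow D.m φ₁) X ≤ deriv (phiPow D.m φ₂) X := by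
  have hXmem : X ∈ Ioc 0 X := ⟨hX, le_rfl⟩
  have h := (P₂.hasDerivAt_phiPow hXmem).sub (P₁.hasDerivAt_phiPow hXmem)
  rw [← P₂.deriv_phiPow hXmem, ← P₁.deriv_phiPow hXmem] at h
  have := h.nonneg_of_le_on_left hX fun ξ hξ => by
    simp only [Pi.sub_apply, phiPow, hXeq, sub_self]
    exact sub_nonpos.2 (Real.rpow_le_rpow (P₂.nonneg hξ.2.le) (hlt ξ hξ).le
      D.m_pos.le)
  linarith

theorem eventually_deriv_phiPow_lt_levelMap (P₁ : IsIncreasingProfileOn D c₁ φ₁ X)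
    (P₂ : IsIncreasingProfileOn D c₂ φ₂ X) (hc₂ : 0 ≤ c₂) (hc : c₂ < c₁) (hX : 0 < X)
    (hle : ∀ ζ ∈ Icc 0 X, φ₂ ζ ≤ φ₁ ζ) :
    ∀ᶠ ζ in 𝓝[>] 0, deriv (phiPow D.m φ₂) ζ < deriv (phiPow D.m φ₁) (levelMap φ₁ φ₂ X ζ) := by
  have hXle := hle X ⟨hX.le, le_rfl⟩
  have hχ : Tendsto (levelMap φ₁ φ₂ X) (𝓝[>] 0) (𝓝[>] 0) := by
    refine tendsto_nhdsWithin_of_tendsto_nhds_of_eventually_within _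
      (tendsto_of_tendsto_of_tendsto_of_le_of_le' tendsto_const_nhds
        (tendsto_id.mono_left nhdsWithin_le_nhds) ?_ ?_) ?_
    · filter_upwards [Ioc_mem_nhdsGT hX] with ζ hζ using (levelMap_pos P₁ P₂ hXle hζ).le
    · filter_upwards [Ioc_mem_nhdsGT hX] with ζ hζ using
        levelMap_le P₁ P₂ hXle (Ioc_subset_Icc_self hζ) (hle ζ (Ioc_subset_Icc_self hζ))
    · filter_upwards [Ioc_mem_nhdsGT hX] with ζ hζ using levelMap_pos P₁ P₂ hXle hζ
  have h₁ := (P₁.tendsto_deriv_phiPow_div (hc₂.trans hc.le) hX).comp hχ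
  have h₂ := P₂.tendsto_deriv_phiPow_div hc₂ hX
  filter_upwards [h₂.eventually_lt h₁ hc, Ioc_mem_nhdsGT hX] with ζ hlt hζ
  rw [Function.comp_apply, apply_levelMap P₁ P₂ hXle (Ioc_subset_Icc_self hζ)] at hlt
  exact (div_lt_div_iff_of_pos_right (P₂.pos hζ)).1 hlt

theorem monotoneOn_sub_levelMap (P₁ : IsIncreasingProfileOn D c₁ φ₁ X)
    (P₂ : IsIncreasingProfileOn D c₂ φ₂ X) (hX : φ₂ X ≤ φ₁ X) {ζ₀ : ℝ} (hζ₀ : ζ₀ ∈ Ioc 0 X)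
    (hψ : ∀ ζ ∈ Ioo 0 ζ₀,
      deriv (phiPow D.m φ₂) ζ < deriv (phiPow D.m φ₁) (levelMap φ₁ φ₂ X ζ)) :
    MonotoneOn (fun ζ => ζ - levelMap φ₁ φ₂ X ζ) (Ioc 0 ζ₀) := by
  have hsub : Ioc 0 ζ₀ ⊆ Icc 0 X := fun ζ hζ => ⟨hζ.1.le, hζ.2.trans hζ₀.2⟩
  refine monotoneOn_of_hasDerivWithinAt_nonneg (convex_Ioc 0 ζ₀)
    (continuousOn_id.sub ((continuousOn_levelMap P₁ P₂ hX (hζ₀.1.le.trans hζ₀.2)).mono hsub))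
    (f' := fun ζ => 1 - deriv (phiPow D.m φ₂) ζ / deriv (phiPow D.m φ₁) (levelMap φ₁ φ₂ X ζ))
    (fun ζ hζ => ?_) (fun ζ hζ => ?_) <;> rw [interior_Ioc] at hζ
  · exact ((hasDerivAt_id ζ).sub (hasDerivAt_levelMap P₁ P₂ hX
      ⟨hζ.1, hζ.2.trans_le hζ₀.2⟩ (hψ ζ hζ))).hasDerivWithinAt
  · have hψ₂ := P₂.deriv_phiPow_nonneg ⟨hζ.1, hζ.2.le.trans hζ₀.2⟩
    rw [sub_nonneg, div_le_one (hψ₂.trans_lt (hψ ζ hζ))]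
    exact (hψ ζ hζ).le

theorem apply_levelMap_sub_le (P₁ : IsIncreasingProfileOn D c₁ φ₁ X)
    (P₂ : IsIncreasingProfileOn D c₂ φ₂ X) (hc₂ : 0 ≤ c₂) (hc : c₂ ≤ c₁)
    (hle : ∀ ζ ∈ Icc 0 X, φ₂ ζ ≤ φ₁ ζ) {ζ₀ : ℝ} (hζ₀ : ζ₀ ∈ Ioc 0 X)
    (hψ : ∀ ζ ∈ Ioo 0 ζ₀,
      deriv (phiPow D.m φ₂) ζ < deriv (phiPow D.m φ₁) (levelMap φ₁ φ₂ X ζ))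
    {ζ : ℝ} (hζ : ζ ∈ Ioc 0 ζ₀) :
    φ₁ (levelMap φ₁ φ₂ X ζ - c₁ * D.r) ≤ φ₂ (ζ - c₂ * D.r) := by
  have hX := hle X ⟨hζ₀.1.le.trans hζ₀.2, le_rfl⟩
  have hζX : ζ ∈ Icc 0 X := ⟨hζ.1.le, hζ.2.trans hζ₀.2⟩
  have hχζ : levelMap φ₁ φ₂ X ζ ≤ ζ := levelMap_le P₁ P₂ hX hζX (hle ζ hζX)
  have hr : c₂ * D.r ≤ c₁ * D.r := mul_le_mul_of_nonneg_right hc D.hr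
  have hr₂ : 0 ≤ c₂ * D.r := mul_nonneg hc₂ D.hr
  set σ := levelMap φ₁ φ₂ X ζ - c₁ * D.r
  rcases le_or_gt σ 0 with hσ | hσ
  · rw [P₁.eq_zero_of_nonpos σ hσ]
    exact P₂.nonneg (by linarith [hζX.2])
  -- `σ` is itself a level-matched point `levelMap ζ'`, and the gap `ζ - levelMap ζ` only grows.
  have hσζ : σ ≤ levelMap φ₁ φ₂ X ζ := by linarith
  have hσX : σ ∈ Icc 0 X := ⟨hσ.le, by linarith [hζX.2]⟩
  obtain ⟨ζ', hζ', hχζ'⟩ := intermediate_value_Icc (hσζ.trans hχζ)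
    ((continuousOn_levelMap P₁ P₂ hX (hζX.1.trans hζX.2)).mono (Icc_subset_Icc hσ.le hζX.2))
    ⟨levelMap_le P₁ P₂ hX hσX (hle σ hσX), hσζ⟩
  have hgap := monotoneOn_sub_levelMap P₁ P₂ hX hζ₀ hψ ⟨hσ.trans_le hζ'.1, hζ'.2.trans hζ.2⟩
    hζ hζ'.2
  simp only [hχζ'] at hgap
  calc φ₁ σ = φ₂ ζ' := by
        rw [← hχζ', apply_levelMap P₁ P₂ hX ⟨hσ.le.trans hζ'.1, hζ'.2.trans hζX.2⟩]
    _ ≤ φ₂ (ζ - c₂ * D.r) :=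
        P₂.monotoneOn_Iic (hζ'.2.trans hζX.2) (by simp only [mem_Iic]; linarith [hζX.2])
          (by linarith)

theorem deriv_deriv_phiPow_le_levelMap (P₁ : IsIncreasingProfileOn D c₁ φ₁ X)
    (P₂ : IsIncreasingProfileOn D c₂ φ₂ X) (hc₂ : 0 ≤ c₂) (hc : c₂ ≤ c₁)
    (hle : ∀ ζ ∈ Icc 0 X, φ₂ ζ ≤ φ₁ ζ) {ζ₀ : ℝ} (hζ₀ : ζ₀ ∈ Ioc 0 X)
    (hψ : ∀ ζ ∈ Ioo 0 ζ₀,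
      deriv (phiPow D.m φ₂) ζ < deriv (phiPow D.m φ₁) (levelMap φ₁ φ₂ X ζ))
    {ζ : ℝ} (hζ : ζ ∈ Ioo 0 ζ₀) :
    deriv (deriv (phiPow D.m φ₂)) ζ ≤ deriv (deriv (phiPow D.m φ₁)) (levelMap φ₁ φ₂ X ζ) := by
  have hX := hle X ⟨hζ₀.1.le.trans hζ₀.2, le_rfl⟩
  have hζX : ζ ∈ Ioc 0 X := ⟨hζ.1, hζ.2.le.trans hζ₀.2⟩
  have hχ : levelMap φ₁ φ₂ X ζ ∈ Ioc 0 X :=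
    ⟨levelMap_pos P₁ P₂ hX hζX, (levelMap_mem P₁ P₂ hX (Ioc_subset_Icc_self hζX)).2⟩
  have hφ' := deriv_lt_deriv_levelMap P₁ P₂ hX hζX (hψ ζ hζ)
  have hr₁ : 0 ≤ c₁ * D.r := mul_nonneg (hc₂.trans hc) D.hr
  have hr₂ : 0 ≤ c₂ * D.r := mul_nonneg hc₂ D.hr
  have hb := D.monotoneOn_b (P₁.nonneg (by linarith [hχ.2])) (P₂.nonneg (by linarith [hζX.2]))
    (apply_levelMap_sub_le P₁ P₂ hc₂ hc hle hζ₀ hψ ⟨hζ.1, hζ.2.le⟩)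
  rw [(P₂.hasDerivAt_deriv_phiPow ζ hζX).deriv, (P₁.hasDerivAt_deriv_phiPow _ hχ).deriv,
    apply_levelMap P₁ P₂ hX (Ioc_subset_Icc_self hζX)]
  nlinarith [mul_le_mul hc hφ'.le (P₂.deriv_nonneg hζX) (hc₂.trans hc)]

theorem monotoneOn_sq_deriv_phiPow_sub (P₁ : IsIncreasingProfileOn D c₁ φ₁ X)
    (P₂ : IsIncreasingProfileOn D c₂ φ₂ X) (hc₂ : 0 ≤ c₂) (hc : c₂ ≤ c₁)
    (hle : ∀ ζ ∈ Icc 0 X, φ₂ ζ ≤ φ₁ ζ) {ζ₀ : ℝ} (hζ₀ : ζ₀ ∈ Ioc 0 X)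
    (hψ : ∀ ζ ∈ Ioo 0 ζ₀,
      deriv (phiPow D.m φ₂) ζ < deriv (phiPow D.m φ₁) (levelMap φ₁ φ₂ X ζ)) :
    MonotoneOn (fun ζ => deriv (phiPow D.m φ₁) (levelMap φ₁ φ₂ X ζ) ^ 2 -
      deriv (phiPow D.m φ₂) ζ ^ 2) (Ioc 0 ζ₀) := by
  have hX := hle X ⟨hζ₀.1.le.trans hζ₀.2, le_rfl⟩
  have hsub : Ioc 0 ζ₀ ⊆ Ioc 0 X := Ioc_subset_Ioc_right hζ₀.2
  refine monotoneOn_of_hasDerivWithinAt_nonneg (convex_Ioc 0 ζ₀)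
    ((((continuousOn_deriv_phiPow_levelMap P₁ P₂ hX).mono hsub).pow 2).sub
      ((P₂.continuousOn_deriv_phiPow.mono hsub).pow 2))
    (f' := fun ζ => 2 * deriv (phiPow D.m φ₂) ζ * (deriv (deriv (phiPow D.m φ₁))
      (levelMap φ₁ φ₂ X ζ) - deriv (deriv (phiPow D.m φ₂)) ζ))
    (fun ζ hζ => ?_) (fun ζ hζ => ?_) <;> rw [interior_Ioc] at hζ
  · have hζX : ζ ∈ Ioo 0 X := ⟨hζ.1, hζ.2.trans_le hζ₀.2⟩
    have hχ : levelMap φ₁ φ₂ X ζ ∈ Ioc 0 X := ⟨levelMap_pos P₁ P₂ hX (hsub ⟨hζ.1, hζ.2.le⟩),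
      (levelMap_mem P₁ P₂ hX ⟨hζ.1.le, hζX.2.le⟩).2⟩
    have hψ₁ : deriv (phiPow D.m φ₁) (levelMap φ₁ φ₂ X ζ) ≠ 0 :=
      ((P₂.deriv_phiPow_nonneg (hsub ⟨hζ.1, hζ.2.le⟩)).trans_lt (hψ ζ hζ)).ne'
    have h₁ := ((P₁.hasDerivAt_deriv_phiPow _ hχ).differentiableAt.hasDerivAt.comp ζ
      (hasDerivAt_levelMap P₁ P₂ hX hζX (hψ ζ hζ))).pow 2
    have h₂ :=
      (P₂.hasDerivAt_deriv_phiPow ζ (hsub ⟨hζ.1, hζ.2.le⟩)).differentiableAt.hasDerivAt.pow 2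
    refine (h₁.sub h₂).hasDerivWithinAt.congr_deriv ?_
    simp only [Function.comp_apply]
    field_simp
    ring
  · exact mul_nonneg (mul_nonneg zero_le_two (P₂.deriv_phiPow_nonneg (hsub ⟨hζ.1, hζ.2.le⟩)))
      (sub_nonneg.2 (deriv_deriv_phiPow_le_levelMap P₁ P₂ hc₂ hc hle hζ₀ hψ hζ))

theorem sq_deriv_phiPow_lt_sq_levelMap (P₁ : IsIncreasingProfileOn D c₁ φ₁ X)
    (P₂ : IsIncreasingProfileOn D c₂ φ₂ X) (hc₂ : 0 ≤ c₂) (hc : c₂ ≤ c₁)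
    (hle : ∀ ζ ∈ Icc 0 X, φ₂ ζ ≤ φ₁ ζ) {ζ₀ : ℝ} (hζ₀ : ζ₀ ∈ Ioc 0 X)
    (hψ : ∀ ζ ∈ Ioo 0 ζ₀,
      deriv (phiPow D.m φ₂) ζ < deriv (phiPow D.m φ₁) (levelMap φ₁ φ₂ X ζ)) :
    deriv (phiPow D.m φ₂) ζ₀ ^ 2 < deriv (phiPow D.m φ₁) (levelMap φ₁ φ₂ X ζ₀) ^ 2 := by
  have hmid : ζ₀ / 2 ∈ Ioo 0 ζ₀ := ⟨half_pos hζ₀.1, half_lt_self hζ₀.1⟩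
  have hψ₂ := P₂.deriv_phiPow_nonneg ⟨hmid.1, hmid.2.le.trans hζ₀.2⟩
  have hψmid := hψ _ hmid
  have := monotoneOn_sq_deriv_phiPow_sub P₁ P₂ hc₂ hc hle hζ₀ hψ ⟨hmid.1, hmid.2.le⟩
    ⟨hζ₀.1, le_rfl⟩ hmid.2.le
  nlinarith

end Comparison

theorem profile_monotone_in_speed_general (D : FisherData) (k c₁ c₂ : ℝ)
    (hc₂ : 0 < c₂) (hc : c₂ < c₁)
    (ξ₀₁ ξ₀₂ : EReal) (φ₁ φ₂ : ℝ → ℝ)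
    (h₁ : IsSharpLocalProfile D c₁ k ξ₀₁ φ₁) (he₁ : EdgeAsymp D.m c₁ φ₁)
    (h₂ : IsSharpLocalProfile D c₂ k ξ₀₂ φ₂) (he₂ : EdgeAsymp D.m c₂ φ₂)
    (ξh₁ ξh₂ : EReal)
    (hξh₁le : ξh₁ ≤ ξ₀₁)
    (hmono₁ : StrictMonoOn φ₁ {ξ : ℝ | 0 < ξ ∧ (ξ : EReal) < ξh₁})
    (hξh₂le : ξh₂ ≤ ξ₀₂)
    (hmono₂ : StrictMonoOn φ₂ {ξ : ℝ | 0 < ξ ∧ (ξ : EReal) < ξh₂}) :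
    ∀ ξ : ℝ, 0 < ξ → (ξ : EReal) < min ξh₁ ξh₂ → φ₂ ξ < φ₁ ξ := by
  intro ξ hξ hξh
  by_contra! hcross
  obtain ⟨X, hX, hXeq, hbelow⟩ := exists_first_crossing hξ h₂.continuous.continuousOn
    h₁.continuous.continuousOn (EdgeAsymp.eventually_lt D.hm hc₂.le hc he₁ he₂) hcross
  have hXξ : (X : EReal) < min ξh₁ ξh₂ := (EReal.coe_le_coe_iff.2 hX.2).trans_lt hξh
  have P₁ := h₁.isIncreasingProfileOn hξh₁le hmono₁ (hXξ.trans_le (min_le_left _ _))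
  have P₂ := h₂.isIncreasingProfileOn hξh₂le hmono₂ (hXξ.trans_le (min_le_right _ _))
  have hle : ∀ ζ ∈ Icc 0 X, φ₂ ζ ≤ φ₁ ζ := by
    rintro ζ ⟨h0, hζX⟩
    rcases h0.eq_or_lt with rfl | h0
    · rw [P₁.eq_zero_of_nonpos 0 le_rfl, P₂.eq_zero_of_nonpos 0 le_rfl]
    rcases hζX.eq_or_lt with rfl | hζX
    · exact hXeq.le
    exact (hbelow ζ ⟨h0, hζX⟩).le
  obtain ⟨ζ₀, hζ₀, hψ₀, hψ⟩ := exists_first_crossing hX.1 P₂.continuousOn_deriv_phiPow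
    (continuousOn_deriv_phiPow_levelMap P₁ P₂ hXeq.le)
    (eventually_deriv_phiPow_lt_levelMap P₁ P₂ hc₂.le hc hX.1 hle)
    (by rw [levelMap_self P₁ hX.1.le hXeq.symm]
        exact deriv_phiPow_le_of_lt_left P₁ P₂ hX.1 hXeq hbelow)
  exact (sq_deriv_phiPow_lt_sq_levelMap P₁ P₂ hc₂.le hc.le hle hζ₀ hψ).ne (by rw [hψ₀])

/-- monotone dependence on the speed: for maximal sharp local wave
profiles with the same ceiling `k` and speeds `c₁ > c₂ > 0`, one has
`φ₁(ξ) > φ₂(ξ)` on `(0, min{ξ̂₁, ξ̂₂})`, where `(0, ξ̂ᵢ)` is the maximal interval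
of strict monotonicity of `φᵢ`. -/
theorem profile_monotone_in_speed (D : FisherData) (k c₁ c₂ : ℝ)
    (hk : D.κ ≤ k) (hc₂ : 0 < c₂) (hc : c₂ < c₁)
    (ξ₀₁ ξ₀₂ : EReal) (φ₁ φ₂ : ℝ → ℝ)
    (h₁ : IsSharpLocalProfile D c₁ k ξ₀₁ φ₁) (he₁ : EdgeAsymp D.m c₁ φ₁)
    (hmax₁ : ∀ (ξ₀' : EReal) (φ' : ℝ → ℝ),
      IsSharpLocalProfile D c₁ k ξ₀' φ' → EdgeAsymp D.m c₁ φ' → ξ₀' ≤ ξ₀₁)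
    (h₂ : IsSharpLocalProfile D c₂ k ξ₀₂ φ₂) (he₂ : EdgeAsymp D.m c₂ φ₂)
    (hmax₂ : ∀ (ξ₀' : EReal) (φ' : ℝ → ℝ),
      IsSharpLocalProfile D c₂ k ξ₀' φ' → EdgeAsymp D.m c₂ φ' → ξ₀' ≤ ξ₀₂)
    (ξh₁ ξh₂ : EReal)
    (hξh₁pos : 0 < ξh₁) (hξh₁le : ξh₁ ≤ ξ₀₁)
    (hmono₁ : StrictMonoOn φ₁ {ξ : ℝ | 0 < ξ ∧ (ξ : EReal) < ξh₁})
    (hξh₁max : ∀ ζ : EReal, ζ ≤ ξ₀₁ →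
      StrictMonoOn φ₁ {ξ : ℝ | 0 < ξ ∧ (ξ : EReal) < ζ} → ζ ≤ ξh₁)
    (hξh₂pos : 0 < ξh₂) (hξh₂le : ξh₂ ≤ ξ₀₂)
    (hmono₂ : StrictMonoOn φ₂ {ξ : ℝ | 0 < ξ ∧ (ξ : EReal) < ξh₂})
    (hξh₂max : ∀ ζ : EReal, ζ ≤ ξ₀₂ →
      StrictMonoOn φ₂ {ξ : ℝ | 0 < ξ ∧ (ξ : EReal) < ζ} → ζ ≤ ξh₂) :
    ∀ ξ : ℝ, 0 < ξ → (ξ : EReal) < min ξh₁ ξh₂ → φ₂ ξ < φ₁ ξ :=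
  profile_monotone_in_speed_general D k c₁ c₂ hc₂ hc ξ₀₁ ξ₀₂ φ₁ φ₂ h₁ he₁ h₂ he₂ ξh₁ ξh₂ hξh₁le
    hmono₁ hξh₂le hmono₂
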